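/- Let l ≥ 2 and let p = s_{i_1}s_{i_2}⋯s_{i_l} be a product of short conjugates of s_1 = bwb in G = ℤ/2 * ℤ/3 in which at least one pair of consecutive terms does not join well. Then for every prescribed j ∈ {0,1,2} there is a finite sequence of Hurwitz moves transforming the sequence (s_{i_1},…,s_{i_l}) into a sequence (s_{j_1},…,s_{j_l}) of short conjugates of s_1 (with the same number of terms) whose first term is s_{j_1} = s_j; similarly, for every prescribed j ∈ {0,1,2} there is a finite sequence of Hurwitz moves producing such a sequence of short conjugates whose last term is s_j. -/

import Mathlib

/-!
Index the short conjugates by `ZMod 3` as `s₀ = wb²`, `s₁ = bwb`, `s₂ = b²w`; then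
`sᵢ sᵢ₊₁ = b` for every `i`. For any family with `sᵢ sᵢ₊₁` constant, the two Hurwitz moves send
an adjacent pair `(sᵢ, sᵢ₊₁)` to `(sᵢ₊₁, sᵢ₊₂)` and to `(sᵢ₋₁, sᵢ)`. So such a pair can be
rotated to `(sⱼ, sⱼ₊₁)` for any `j`, and, once rotated suitably, moved one step past a neighbour
`sₐ` with every term still of the form `sₖ`; iterating brings it to the front or to the back.

It remains to see that a pair of short conjugates that does not join well has the shape
`(sₐ, sₐ₊₁)`. Every `sᵢ` has length at most 3, and for `c ≠ a + 1` the product `sₐ s_c` has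
length at least 3: in a representation of `G` on five points its image differs from the image
of every word of length at most 2.
-/

/-- `G = ℤ/2 * ℤ/3`, the free product of cyclic groups of orders 2 and 3
(isomorphic to `PSL(2,ℤ)`). -/
abbrev G23 := Monoid.Coprod (Multiplicative (ZMod 2)) (Multiplicative (ZMod 3))

/-- The generator `w` of the `ℤ/2` factor. -/
def w : G23 := Monoid.Coprod.inl (Multiplicative.ofAdd (1 : ZMod 2))

/-- The generator `b` of the `ℤ/3` factor. -/
def b : G23 := Monoid.Coprod.inr (Multiplicative.ofAdd (1 : ZMod 3))

/-- `s₀ = wb²`. -/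
def s0 : G23 := w * b ^ 2

/-- `s₁ = bwb`. -/
def s1 : G23 := b * w * b

/-- `s₂ = b²w`. -/
def s2 : G23 := b ^ 2 * w

/-- The letters `w`, `b`, `b²` from which reduced expressions are built. -/
inductive Letter : Type
  | w : Letter
  | b : Letter
  | b2 : Letter
deriving DecidableEq

/-- Evaluation of a letter in `G23`. -/
def Letter.eval : Letter → G23
  | Letter.w => _root_.w
  | Letter.b => _root_.b
  | Letter.b2 => _root_.b ^ 2

/-- The formal inverse of a letter (`w⁻¹ = w`, `b⁻¹ = b²`, `(b²)⁻¹ = b`). -/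
def Letter.inv : Letter → Letter
  | Letter.w => Letter.w
  | Letter.b => Letter.b2
  | Letter.b2 => Letter.b

/-- Evaluation of a word in the letters `w`, `b`, `b²`. -/
def wordEval (L : List Letter) : G23 := (L.map Letter.eval).prod

/-- A word is reduced if no two consecutive letters are both equal to `w` or both
powers of `b`; i.e. the letters alternate between `w` and powers of `b`. -/
def Reduced (L : List Letter) : Prop :=
  List.Chain' (fun x y => x = Letter.w ↔ ¬ y = Letter.w) L

/-- The length `l(a)` of an element of `G23`: the number of letters in its reduced
expression (`l(1) = 0`). -/
noncomputable def len (g : G23) : ℕ :=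
  sInf {n : ℕ | ∃ L : List Letter, Reduced L ∧ wordEval L = g ∧ L.length = n}

/-- The short conjugates of `s₁`. -/
def shortSet : Set G23 := {s0, s1, s2}

/-- Two conjugates of `s₁` join well if `l(gh) ≥ max (l(g), l(h))`. -/
def JoinsWell (g h : G23) : Prop := max (len g) (len h) ≤ len (g * h)

/-- A single Hurwitz move on a finite sequence of elements of a group: some consecutive
pair `(a, b)` is replaced by `(b, b⁻¹ * a * b)` or by `(a * b * a⁻¹, a)`. -/
def HurwitzMove {G : Type*} [Group G] (L L' : List G) : Prop :=
  ∃ (p : List G) (x y : G) (t : List G),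
    L = p ++ x :: y :: t ∧
    (L' = p ++ y :: (y⁻¹ * x * y) :: t ∨ L' = p ++ (x * y * x⁻¹) :: x :: t)

/-- A finite sequence of Hurwitz moves. -/
def HurwitzEquiv {G : Type*} [Group G] : List G → List G → Prop :=
  Relation.ReflTransGen HurwitzMove

section CyclicFamily

variable {G : Type*} [Group G] {n : ℕ} {s : ZMod n → G} {c : G}

theorem hurwitzMove_succ (hs : ∀ i, s i * s (i + 1) = c) (P T : List G) (i : ZMod n) :
    HurwitzMove (P ++ s i :: s (i + 1) :: T) (P ++ s (i + 1) :: s (i + 1 + 1) :: T) := by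
  refine ⟨P, _, _, T, rfl, Or.inl ?_⟩
  rw [mul_assoc, hs, ← hs (i + 1), inv_mul_cancel_left]

theorem hurwitzMove_pred (hs : ∀ i, s i * s (i + 1) = c) (P T : List G) (i : ZMod n) :
    HurwitzMove (P ++ s (i + 1) :: s (i + 1 + 1) :: T) (P ++ s i :: s (i + 1) :: T) := by
  refine ⟨P, _, _, T, rfl, Or.inr ?_⟩
  rw [hs, ← hs i, mul_inv_cancel_right]

theorem hurwitzEquiv_rotate (hs : ∀ i, s i * s (i + 1) = c) (P T : List G) (i j : ZMod n) :
    HurwitzEquiv (P ++ s i :: s (i + 1) :: T) (P ++ s j :: s (j + 1) :: T) := by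
  suffices key : ∀ k : ℤ, HurwitzEquiv (P ++ s i :: s (i + 1) :: T)
      (P ++ s (i + k) :: s (i + k + 1) :: T) by
    simpa using key (j - i).cast
  intro k
  induction k with
  | zero => simpa [HurwitzEquiv] using Relation.ReflTransGen.refl
  | succ k ih =>
    simpa [HurwitzEquiv, ← add_assoc] using ih.tail (hurwitzMove_succ hs P T _)
  | pred k ih =>
    have := hurwitzMove_pred hs P T (i + (-k : ℤ) - 1)
    rw [sub_add_cancel] at this
    simpa [HurwitzEquiv, sub_eq_add_neg, add_assoc] using ih.tail this

theorem exists_hurwitzEquiv_cons_cons (hs : ∀ i, s i * s (i + 1) = c) (P T : List (ZMod n))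
    (i j : ZMod n) : ∃ T' : List (ZMod n), T'.length = P.length + T.length ∧
      HurwitzEquiv ((P ++ i :: (i + 1) :: T).map s) ((j :: (j + 1) :: T').map s) := by
  induction P using List.reverseRecOn generalizing i T with
  | nil => exact ⟨T, by simp, by simpa using hurwitzEquiv_rotate hs [] (T.map s) i j⟩
  | append_singleton P a ih =>
    obtain ⟨a, rfl⟩ : ∃ a', a = a' + 1 := ⟨a - 1, by simp⟩
    obtain ⟨T', hlen, hT'⟩ := ih ((a + 1 + 1 + 1) :: T) a
    refine ⟨T', by simp [hlen]; omega, Relation.ReflTransGen.trans ?_ hT'⟩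
    have rotate := hurwitzEquiv_rotate hs (P.map s ++ [s (a + 1)]) (T.map s) i (a + 1 + 1)
    have move := hurwitzMove_pred hs (P.map s) (s (a + 1 + 1 + 1) :: T.map s) a
    simp only [List.append_assoc, List.singleton_append] at rotate
    simpa [HurwitzEquiv] using rotate.tail move

theorem exists_hurwitzEquiv_append_pair (hs : ∀ i, s i * s (i + 1) = c) (P T : List (ZMod n))
    (i j : ZMod n) : ∃ P' : List (ZMod n), P'.length = P.length + T.length ∧
      HurwitzEquiv ((P ++ i :: (i + 1) :: T).map s) ((P' ++ [j, j + 1]).map s) := by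
  induction T generalizing i P with
  | nil => exact ⟨P, by simp, by simpa using hurwitzEquiv_rotate hs (P.map s) [] i j⟩
  | cons a T ih =>
    obtain ⟨a, rfl⟩ : ∃ a', a = a' + 1 + 1 := ⟨a - 1 - 1, by simp⟩
    obtain ⟨P', hlen, hP'⟩ := ih (P ++ [a]) (a + 1 + 1)
    refine ⟨P', by simp [hlen]; omega, Relation.ReflTransGen.trans ?_ hP'⟩
    have rotate := hurwitzEquiv_rotate hs (P.map s) (s (a + 1 + 1) :: T.map s) i a
    have move := hurwitzMove_succ hs (P.map s ++ [s a]) (T.map s) (a + 1)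
    simp only [List.append_assoc, List.singleton_append] at move
    simpa [HurwitzEquiv] using rotate.tail move

end CyclicFamily

theorem w_sq : w ^ 2 = 1 := by
  rw [w, ← map_pow]; exact map_one _

theorem b_pow_three : b ^ 3 = 1 := by
  rw [b, ← map_pow]; exact map_one _

def shortConj : ZMod 3 → G23
  | 0 => s0
  | 1 => s1
  | 2 => s2

theorem shortConj_mul_shortConj_add_one (i : ZMod 3) : shortConj i * shortConj (i + 1) = b := by
  fin_cases i
  · show w * b ^ 2 * (b * w * b) = b
    rw [show w * b ^ 2 * (b * w * b) = w * b ^ 3 * w * b by group, b_pow_three, mul_one, ← sq,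
      w_sq, one_mul]
  · show b * w * b * (b ^ 2 * w) = b
    rw [show b * w * b * (b ^ 2 * w) = b * w * b ^ 3 * w by group, b_pow_three, mul_one,
      mul_assoc, ← sq, w_sq, mul_one]
  · show b ^ 2 * w * (w * b ^ 2) = b
    rw [mul_assoc, ← mul_assoc w, ← sq, w_sq, one_mul, ← pow_add, pow_succ, b_pow_three, one_mul]

instance : Fintype Letter :=
  ⟨{.w, .b, .b2}, fun x => by cases x <;> decide⟩

theorem reduced_iff_isChain {W : List Letter} :
    Reduced W ↔ W.IsChain (fun x y => x = .w ↔ ¬ y = .w) := Iff.rfl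

instance : DecidablePred Reduced := fun _ => decidable_of_iff _ reduced_iff_isChain.symm

theorem wordEval_cons (x : Letter) (W : List Letter) :
    wordEval (x :: W) = x.eval * wordEval W := by
  simp [wordEval]

def Letter.reduceCons : Letter → List Letter → List Letter
  | .w, .w :: t => t
  | .b, .b :: t => .b2 :: t
  | .b, .b2 :: t => t
  | .b2, .b :: t => t
  | .b2, .b2 :: t => .b :: t
  | x, W => x :: W

theorem Letter.wordEval_reduceCons (x : Letter) (W : List Letter) :
    wordEval (x.reduceCons W) = x.eval * wordEval W := by
  rcases W with _ | ⟨y, t⟩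
  · cases x <;> rfl
  cases x <;> cases y <;> simp only [reduceCons, wordEval_cons, eval, ← mul_assoc]
  · rw [← sq, w_sq, one_mul]
  · rw [← sq]
  · rw [← pow_succ', b_pow_three, one_mul]
  · rw [← pow_succ, b_pow_three, one_mul]
  · rw [← pow_add, pow_succ, b_pow_three, one_mul]

theorem Letter.reduced_reduceCons (x : Letter) {W : List Letter} (hW : Reduced W) :
    Reduced (x.reduceCons W) := by
  rcases W with _ | ⟨y, t⟩
  · cases x <;> simp [reduceCons, reduced_iff_isChain]
  cases x <;> cases y <;> simp_all [reduceCons, reduced_iff_isChain, List.isChain_cons]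

theorem exists_reduced (g : G23) : ∃ W, Reduced W ∧ wordEval W = g := by
  induction g using Monoid.Coprod.induction_on' with
  | one => exact ⟨[], by simp [reduced_iff_isChain], rfl⟩
  | inl_mul m g ih =>
    obtain ⟨W, hW, rfl⟩ := ih
    obtain rfl | rfl : m = 1 ∨ m = .ofAdd 1 := by revert m; decide
    · exact ⟨W, hW, by simp⟩
    · exact ⟨_, Letter.w.reduced_reduceCons hW, Letter.w.wordEval_reduceCons W⟩
  | inr_mul m g ih =>
    obtain ⟨W, hW, rfl⟩ := ih
    obtain rfl | rfl | rfl : m = 1 ∨ m = .ofAdd 1 ∨ m = .ofAdd 2 := by revert m; decide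
    · exact ⟨W, hW, by simp⟩
    · exact ⟨_, Letter.b.reduced_reduceCons hW, Letter.b.wordEval_reduceCons W⟩
    · exact ⟨_, Letter.b2.reduced_reduceCons hW,
        (Letter.b2.wordEval_reduceCons W).trans (by rw [Letter.eval, b, ← map_pow]; rfl)⟩

theorem len_le_length {W : List Letter} (hW : Reduced W) : len (wordEval W) ≤ W.length :=
  Nat.sInf_le ⟨W, hW, rfl, rfl⟩

-- `len` is an `sInf` over ℕ, which is `0` on the empty set; hence the need for `exists_reduced`.
theorem le_len {g : G23} {k : ℕ} (h : ∀ W, Reduced W → wordEval W = g → k ≤ W.length) :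
    k ≤ len g := by
  obtain ⟨W, hW, hg⟩ := exists_reduced g
  exact le_csInf ⟨_, W, hW, hg, rfl⟩ fun _ ⟨W, hW, hg, hlen⟩ => hlen ▸ h W hW hg

theorem three_le_len {g : G23} (h : ∀ x y : Letter, g ≠ 1 ∧ g ≠ x.eval ∧ g ≠ x.eval * y.eval) :
    3 ≤ len g := by
  refine le_len fun W _ hW => ?_
  match W, hW with
  | [], hW => exact absurd hW.symm (h .w .w).1
  | [x], hW => exact absurd (by simpa [wordEval] using hW.symm) (h x x).2.1
  | [x, y], hW => exact absurd (by simpa [wordEval] using hW.symm) (h x y).2.2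
  | _ :: _ :: _ :: _, _ => simp

def toPerm : G23 →* Equiv.Perm (Fin 5) :=
  Monoid.Coprod.lift
    { toFun := fun x => Equiv.swap 3 4 ^ x.toAdd.val, map_one' := rfl, map_mul' := by decide }
    { toFun := fun x => (Equiv.swap 1 2 * Equiv.swap 2 3) ^ x.toAdd.val, map_one' := rfl,
      map_mul' := by decide }

theorem len_shortConj_le (i : ZMod 3) : len (shortConj i) ≤ 3 := by
  obtain ⟨W, hW, hlen, hWi⟩ : ∃ W, Reduced W ∧ W.length ≤ 3 ∧ wordEval W = shortConj i := by
    fin_cases i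
    exacts [⟨[.w, .b2], by decide, by decide, by simp [wordEval, Letter.eval, shortConj, s0]⟩,
      ⟨[.b, .w, .b], by decide, by decide,
        by simp [wordEval, Letter.eval, shortConj, s1, mul_assoc]⟩,
      ⟨[.b2, .w], by decide, by decide, by simp [wordEval, Letter.eval, shortConj, s2]⟩]
  exact hWi ▸ (len_le_length hW).trans hlen

theorem three_le_len_shortConj_mul {a c : ZMod 3} (h : c ≠ a + 1) :
    3 ≤ len (shortConj a * shortConj c) := by
  have key : ∀ a c : ZMod 3, c ≠ a + 1 → ∀ x y : Letter,
      toPerm (shortConj a * shortConj c) ≠ toPerm 1 ∧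
      toPerm (shortConj a * shortConj c) ≠ toPerm x.eval ∧
      toPerm (shortConj a * shortConj c) ≠ toPerm (x.eval * y.eval) := by
    decide
  refine three_le_len fun x y => ?_
  obtain ⟨h1, h2, h3⟩ := key a c h x y
  exact ⟨ne_of_apply_ne _ h1, ne_of_apply_ne _ h2, ne_of_apply_ne _ h3⟩

theorem joinsWell_shortConj {a c : ZMod 3} (h : c ≠ a + 1) :
    JoinsWell (shortConj a) (shortConj c) :=
  max_le ((len_shortConj_le a).trans (three_le_len_shortConj_mul h))
    ((len_shortConj_le c).trans (three_le_len_shortConj_mul h))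

theorem range_shortConj : Set.range shortConj = shortSet := by
  ext g
  constructor
  · rintro ⟨i, rfl⟩
    fin_cases i <;> simp [shortConj, shortSet]
  · rintro (rfl | rfl | rfl)
    exacts [⟨0, rfl⟩, ⟨1, rfl⟩, ⟨2, rfl⟩]

theorem shortConj_mem (i : ZMod 3) : shortConj i ∈ shortSet :=
  range_shortConj ▸ ⟨i, rfl⟩

theorem short_proposition_general (L : List G23)
    (hshort : ∀ g ∈ L, g ∈ shortSet)
    (hbad : ¬ List.Chain' JoinsWell L) :
    ∀ s ∈ shortSet,
      (∃ L' : List G23, HurwitzEquiv L L' ∧ L'.length = L.length ∧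
        (∀ g ∈ L', g ∈ shortSet) ∧ L'.head? = some s) ∧
      (∃ L' : List G23, HurwitzEquiv L L' ∧ L'.length = L.length ∧
        (∀ g ∈ L', g ∈ shortSet) ∧ L'.getLast? = some s) := by
  intro s hs
  obtain ⟨J, rfl⟩ : L ∈ Set.range (List.map shortConj) := by
    rwa [Set.range_list_map, range_shortConj]
  obtain ⟨j, rfl⟩ : s ∈ Set.range shortConj := range_shortConj ▸ hs
  obtain ⟨a, c, P, T, rfl, hac⟩ :
      ∃ a c P T, J = P ++ a :: c :: T ∧ ¬ JoinsWell (shortConj a) (shortConj c) := by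
    simpa [List.isChain_iff_forall_rel_of_append_cons_cons] using
      mt (List.isChain_map shortConj).mpr hbad
  obtain rfl : c = a + 1 := not_not.mp (mt joinsWell_shortConj hac)
  constructor
  · obtain ⟨T', hlen, hT'⟩ :=
      exists_hurwitzEquiv_cons_cons shortConj_mul_shortConj_add_one P T a j
    exact ⟨_, hT', by simp [hlen]; omega,
      List.forall_mem_map.mpr fun i _ => shortConj_mem i, by simp⟩
  · obtain ⟨P', hlen, hP'⟩ :=
      exists_hurwitzEquiv_append_pair shortConj_mul_shortConj_add_one P T a (j - 1)
    exact ⟨_, hP', by simp [hlen]; omega,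
      List.forall_mem_map.mpr fun i _ => shortConj_mem i, by simp⟩

/-- **Proposition (short).**  If `p = s_{i₁}⋯s_{i_l}` (`l ≥ 2`) is a product of short
conjugates of `s₁` in which some pair of consecutive terms does not join well, then for any
prescribed short conjugate `s` there is a finite sequence of Hurwitz moves producing a
sequence of short conjugates, of the same length, whose first term is `s`; and likewise one
whose last term is `s`. -/
theorem short_proposition (L : List G23) (hlen : 2 ≤ L.length)
    (hshort : ∀ g ∈ L, g ∈ shortSet)
    (hbad : ¬ List.Chain' JoinsWell L) :
    ∀ s ∈ shortSet,
      (∃ L' : List G23, HurwitzEquiv L L' ∧ L'.length = L.length ∧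
        (∀ g ∈ L', g ∈ shortSet) ∧ L'.head? = some s) ∧
      (∃ L' : List G23, HurwitzEquiv L L' ∧ L'.length = L.length ∧
        (∀ g ∈ L', g ∈ shortSet) ∧ L'.getLast? = some s) :=
  short_proposition_general L hshort hbad
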